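/- arXiv:2004.02598 — 3 statements merged into one kernel-verified Lean document; each statement's English description precedes it below -/
import Mathlib

section
/- Let n ≥ 2 and let 𝒰 ⊂ ℂ^n be a nonempty bounded monomial polyhedron defined by a matrix B ∈ M_n(ℤ). Then det B ≠ 0, and after possibly switching two rows of B (an operation that does not change 𝒰) one has det B > 0 and B^{-1} ⪰ 0 entrywise; equivalently, the adjugate matrix adj B has all entries nonnegative. -/
open MeasureTheory Complex
open scoped ENNReal NNReal

noncomputable section

/-- The monomial polyhedron associated to a rational matrix `B`: the set of `z` in `ℂⁿ` such
that for each row `j`, the monomial `∏ k, |z k| ^ (B j k)` is defined (no zero raised to a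
negative power) and is `< 1`. -/
def monomialPolyhedron {n : ℕ} (B : Matrix (Fin n) (Fin n) ℚ) : Set (Fin n → ℂ) :=
  {z | ∀ j : Fin n, (∀ k, B j k < 0 → z k ≠ 0) ∧
    ∏ k, ‖z k‖ ^ (B j k : ℝ) < 1}

/-!
In logarithmic coordinates `z = exp x` the polyhedron becomes the open cone `B x < 0`: every such
`x` gives a point of `𝒰`, and a point of `𝒰` gives such an `x` once the logarithms of its vanishing
coordinates are sent to `-∞`. If `𝒰` is bounded, this nonempty cone is bounded above
coordinatewise, so moving from one of its points along `-v` with `B v ≥ 0` must not increase any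
coordinate: `B v ≥ 0 → v ≥ 0`, i.e. `B` is a monotone matrix. A monotone matrix has trivial kernel,
and its inverse sends the basis vectors `eⱼ ≥ 0` to nonnegative columns. Swapping two rows fixes
the sign of `det B` without changing `𝒰`.
-/

namespace Matrix

variable {ι : Type*} [Fintype ι]

def IsMonotone {R : Type*} [NonUnitalNonAssocSemiring R] [Preorder R] (A : Matrix ι ι R) :
    Prop :=
  ∀ v, 0 ≤ A *ᵥ v → 0 ≤ v

theorem IsMonotone.of_map {R S : Type*} [CommRing R] [LinearOrder R] [CommRing S]
    [PartialOrder S] {A : Matrix ι ι R} (f : R →+* S) (hf : StrictMono f)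
    (hA : (A.map f).IsMonotone) : A.IsMonotone := by
  intro v hv i
  have hfv : 0 ≤ A.map f *ᵥ (f ∘ v) := fun j => by
    rw [Pi.zero_apply, ← RingHom.map_mulVec, ← map_zero f, hf.le_iff_le]
    exact hv j
  have := hA _ hfv i
  rwa [Pi.zero_apply, Function.comp_apply, ← map_zero f, hf.le_iff_le] at this

theorem exists_det_submatrix_swap_pos {R : Type*} [DecidableEq ι] [Nontrivial ι] [CommRing R] [LinearOrder R] [IsStrictOrderedRing R]
    (A : Matrix ι ι R) (hA : A.det ≠ 0) :
    ∃ i j : ι, 0 < (A.submatrix (Equiv.swap i j) id).det := by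
  obtain ⟨i, j, hij⟩ := exists_pair_ne ι
  rcases hA.lt_or_gt with hneg | hpos
  · refine ⟨i, j, ?_⟩
    rw [det_permute, Equiv.Perm.sign_swap hij]
    simpa using hneg
  · exact ⟨i, i, by simpa using hpos⟩

variable {𝕜 : Type*} [Field 𝕜] [LinearOrder 𝕜] [IsStrictOrderedRing 𝕜] {A : Matrix ι ι 𝕜}

theorem isMonotone_of_bddAbove (hne : {x | ∀ j, (A *ᵥ x) j < 0}.Nonempty)
    (hbdd : BddAbove {x | ∀ j, (A *ᵥ x) j < 0}) : A.IsMonotone := by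
  obtain ⟨x, hx⟩ := hne
  obtain ⟨M, hM⟩ := hbdd
  intro w hw k
  show (0 : 𝕜) ≤ w k
  by_contra! hwk
  have hxk : x k ≤ M k := hM hx k
  set s := (M k - x k + 1) / -w k
  have hs : 0 ≤ s := div_nonneg (by linarith) (by linarith)
  have hmem : x - s • w ∈ {x | ∀ j, (A *ᵥ x) j < 0} := fun j => by
    rw [mulVec_sub, mulVec_smul, Pi.sub_apply, Pi.smul_apply, smul_eq_mul]
    have hwj : (0 : 𝕜) ≤ (A *ᵥ w) j := hw j
    nlinarith [hx j]
  have hsw : s * -w k = M k - x k + 1 := div_mul_cancel₀ _ (neg_ne_zero.2 hwk.ne)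
  have := hM hmem k
  simp only [Pi.sub_apply, Pi.smul_apply, smul_eq_mul] at this
  linarith

variable [DecidableEq ι]

theorem IsMonotone.det_ne_zero (hA : A.IsMonotone) : A.det ≠ 0 := by
  intro h
  obtain ⟨v, hv0, hv⟩ := exists_mulVec_eq_zero_iff.2 h
  have hnonneg : 0 ≤ v := hA v hv.ge
  have hnonpos : 0 ≤ -v := hA (-v) (by rw [mulVec_neg, hv, neg_zero])
  exact hv0 (le_antisymm (neg_nonneg.1 hnonpos) hnonneg)

theorem IsMonotone.inv_nonneg (hA : A.IsMonotone) (i j : ι) : 0 ≤ A⁻¹ i j := by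
  have hunit : IsUnit A.det := hA.det_ne_zero.isUnit
  have h := hA (A⁻¹ *ᵥ Pi.single j 1) (by
    rw [mulVec_mulVec, mul_nonsing_inv _ hunit, one_mulVec]
    exact Pi.single_nonneg.2 zero_le_one)
  simpa [mulVec_single_one] using h i

theorem IsMonotone.adjugate_nonneg (hA : A.IsMonotone) (hdet : 0 < A.det) (i j : ι) :
    0 ≤ A.adjugate i j := by
  have h : A.adjugate i j = A.det * A⁻¹ i j := by
    rw [inv_def, smul_apply, Ring.inverse_eq_inv', smul_eq_mul, mul_inv_cancel_left₀ hdet.ne']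
  rw [h]
  exact mul_nonneg hdet.le (hA.inv_nonneg i j)

theorem adjugate_nonneg_of_isMonotone_map_intCast {B : Matrix ι ι ℤ}
    (hB : (B.map (Int.cast : ℤ → ℚ)).IsMonotone) (hdet : 0 < B.det) (i j : ι) :
    0 ≤ B.adjugate i j := by
  have hadj := hB.adjugate_nonneg (by rw [← Int.cast_det]; exact_mod_cast hdet) i j
  have hcast : (B.map (Int.cast : ℤ → ℚ)).adjugate i j = B.adjugate i j := by
    simpa using congrFun₂ (RingHom.map_adjugate (Int.castRingHom ℚ) B).symm i j
  rwa [hcast, Int.cast_nonneg_iff] at hadj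

end Matrix

section

open Filter Topology Matrix

variable {n : ℕ} (B : Matrix (Fin n) (Fin n) ℚ)

theorem monomialPolyhedron_submatrix (σ : Equiv.Perm (Fin n)) :
    monomialPolyhedron (B.submatrix σ id) = monomialPolyhedron B := by
  ext z
  simp only [monomialPolyhedron, Set.mem_ofPred_eq, submatrix_apply, id_eq]
  exact σ.forall_congr fun _ => Iff.rfl

theorem exp_mem_monomialPolyhedron_iff (x : Fin n → ℝ) :
    (fun k => Complex.exp (x k)) ∈ monomialPolyhedron B ↔
      ∀ j, (B.map ((↑) : ℚ → ℝ) *ᵥ x) j < 0 := by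
  have hrow : ∀ j, ∏ k, ‖Complex.exp (x k)‖ ^ (B j k : ℝ) =
      Real.exp ((B.map ((↑) : ℚ → ℝ) *ᵥ x) j) := fun j => by
    simp only [norm_exp_ofReal, ← Real.exp_mul, ← Real.exp_sum, mulVec, dotProduct, map_apply,
      mul_comm]
  simp only [monomialPolyhedron, Set.mem_ofPred_eq, hrow, Real.exp_lt_one_iff, ne_eq,
    Complex.exp_ne_zero, not_false_eq_true, implies_true, true_and]

theorem exists_mulVec_neg_of_mem_monomialPolyhedron {z : Fin n → ℂ}
    (hz : z ∈ monomialPolyhedron B) : ∃ x, ∀ j, (B.map ((↑) : ℚ → ℝ) *ᵥ x) j < 0 := by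
  let x : ℝ → Fin n → ℝ := fun t k => if z k = 0 then t else Real.log ‖z k‖
  have hx : ∀ k, Tendsto (fun t => Real.exp (x t k)) atBot (𝓝 ‖z k‖) := fun k => by
    by_cases hk : z k = 0
    · simpa [x, hk] using Real.tendsto_exp_atBot
    · simp [x, hk, Real.exp_log (norm_pos_iff.2 hk)]
  have hrow : ∀ j, ∀ᶠ t in atBot, ∏ k, Real.exp (x t k) ^ (B j k : ℝ) < 1 := fun j => by
    refine (tendsto_finsetProd _ fun k _ => ?_).eventually_lt_const (hz j).2
    refine (Real.continuousAt_rpow_const _ _ ?_).tendsto.comp (hx k)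
    -- exponents at vanishing coordinates are `≥ 0`, where `y ↦ y ^ B j k` is continuous at `0`
    by_contra! h
    exact (hz j).1 k (by exact_mod_cast h.2) (norm_eq_zero.1 h.1)
  obtain ⟨t, ht⟩ := (eventually_all.2 hrow).exists
  refine ⟨x t, (exp_mem_monomialPolyhedron_iff B (x t)).1 fun j => ⟨fun k _ => ?_, ?_⟩⟩
  · exact Complex.exp_ne_zero _
  · simpa only [norm_exp_ofReal] using ht j

theorem bddAbove_of_isBounded_monomialPolyhedron
    (hB : Bornology.IsBounded (monomialPolyhedron B)) :
    BddAbove {x | ∀ j, (B.map ((↑) : ℚ → ℝ) *ᵥ x) j < 0} := by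
  obtain ⟨C, hC⟩ := isBounded_iff_forall_norm_le.1 hB
  refine ⟨fun _ => C, fun x hx k => ?_⟩
  have hexp := hC _ ((exp_mem_monomialPolyhedron_iff B x).2 hx)
  calc x k ≤ x k + 1 := by linarith
    _ ≤ Real.exp (x k) := Real.add_one_le_exp _
    _ = ‖Complex.exp (x k)‖ := (norm_exp_ofReal _).symm
    _ ≤ C := (norm_le_pi_norm (fun k => Complex.exp (x k)) k).trans hexp

theorem isMonotone_of_monomialPolyhedron (hne : (monomialPolyhedron B).Nonempty)
    (hbnd : Bornology.IsBounded (monomialPolyhedron B)) : B.IsMonotone := by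
  obtain ⟨z, hz⟩ := hne
  have hreal : (B.map ((↑) : ℚ → ℝ)).IsMonotone :=
    isMonotone_of_bddAbove (exists_mulVec_neg_of_mem_monomialPolyhedron B hz)
      (bddAbove_of_isBounded_monomialPolyhedron B hbnd)
  exact hreal.of_map (Rat.castHom ℝ) Rat.cast_strictMono

end

/-- If `𝒰` is a nonempty bounded monomial polyhedron defined by an integer
matrix `B`, then `det B ≠ 0`, and after possibly switching two rows (which does not change `𝒰`)
one has `det B > 0` and `B⁻¹ ⪰ 0` entrywise, equivalently `adj B ⪰ 0` entrywise. -/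
theorem monomialPolyhedron_matrix_monotone {n : ℕ} (hn : 2 ≤ n)
    (B : Matrix (Fin n) (Fin n) ℤ)
    (U : Set (Fin n → ℂ)) (hU : U = monomialPolyhedron (B.map (Int.cast : ℤ → ℚ)))
    (hne : U.Nonempty) (hbnd : Bornology.IsBounded U) :
    B.det ≠ 0 ∧
    ∃ B' : Matrix (Fin n) (Fin n) ℤ,
      (∃ i j : Fin n, B' = B.submatrix (Equiv.swap i j) id) ∧
      monomialPolyhedron (B'.map (Int.cast : ℤ → ℚ)) = U ∧
      0 < B'.det ∧
      (∀ i j, 0 ≤ (B'.map (Int.cast : ℤ → ℚ))⁻¹ i j) ∧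
      (∀ i j, 0 ≤ B'.adjugate i j) := by
  subst hU
  have hdet : B.det ≠ 0 := by
    have := (isMonotone_of_monomialPolyhedron _ hne hbnd).det_ne_zero
    rwa [← Int.cast_det, Int.cast_ne_zero] at this
  have : Nontrivial (Fin n) := Fin.nontrivial_iff_two_le.2 hn
  obtain ⟨i, j, hpos⟩ := B.exists_det_submatrix_swap_pos hdet
  set B' := B.submatrix (Equiv.swap i j) id
  have hU' : monomialPolyhedron (B'.map (Int.cast : ℤ → ℚ)) =
      monomialPolyhedron (B.map (Int.cast : ℤ → ℚ)) := by
    rw [← Matrix.submatrix_map]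
    exact monomialPolyhedron_submatrix _ _
  have hB' := isMonotone_of_monomialPolyhedron _ (hU' ▸ hne) (hU' ▸ hbnd)
  exact ⟨hdet, B', ⟨i, j, rfl⟩, hU', hpos, hB'.inv_nonneg,
    Matrix.adjugate_nonneg_of_isMonotone_map_intCast hB' hpos⟩
end
end

section
/- Let 1 ≤ p < ∞, let n ≥ 1, and let γ ∈ ℝ^n satisfy γ_j > −2 for every j. Then there is a constant C > 0 such that for every holomorphic function f on the unit polydisc 𝔻^n with ∫_{𝔻^n} |f|^p dV < ∞, one has ∫_{𝔻^n} |f(z)|^p ∏_{j=1}^n |z_j|^{γ_j} dV(z) ≤ C ∫_{𝔻^n} |f|^p dV. -/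
/-!
Slices of a holomorphic function on the polydisc are holomorphic on the unit disc, so by Tonelli's
theorem it suffices to prove the one-variable estimate `∫_𝔻 |g|^p |z|^γ ≤ C_γ ∫_𝔻 |g|^p` and to
apply it in each coordinate in turn. On `1/2 ≤ |z| < 1` the weight is at most `2^|γ|`. For
`|z| ≤ 1/2`, the mean value property on circles, Jensen's inequality and integration in polar
coordinates give the sub-mean value estimate `|g(z)|^p ≤ (π r²)⁻¹ ∫_{B(z,r)} |g|^p` with `r = 1/2`,
and `|z|^γ` is integrable near `0` precisely because `γ > -2`.
-/

open MeasureTheory Complex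
open scoped ENNReal NNReal

noncomputable section

/-- The unit polydisc `𝔻ⁿ ⊆ ℂⁿ`. -/
def polydisc (n : ℕ) : Set (Fin n → ℂ) := {z | ∀ j, ‖z j‖ < 1}

open Metric Set Function Real

theorem ContinuousOn.measurable_indicator {α β : Type*} [TopologicalSpace α] [MeasurableSpace α]
    [OpensMeasurableSpace α] [TopologicalSpace β] [MeasurableSpace β] [BorelSpace β] [Zero β]
    {f : α → β} {s : Set α} (hf : ContinuousOn f s) (hs : MeasurableSet s) :
    Measurable (s.indicator f) := by
  classical
  rw [← piecewise_eq_indicator]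
  exact hf.measurable_piecewise continuousOn_const hs

theorem rpow_lintegral_le_measure_univ_rpow_mul_lintegral_rpow {α : Type*} [MeasurableSpace α]
    {μ : Measure α} {p : ℝ} (hp : 1 ≤ p) {f : α → ℝ≥0∞} (hf : AEMeasurable f μ) :
    (∫⁻ a, f a ∂μ) ^ p ≤ μ univ ^ (p - 1) * ∫⁻ a, f a ^ p ∂μ := by
  have hHolder := eLpNorm'_le_eLpNorm'_mul_rpow_measure_univ zero_lt_one hp hf.aestronglyMeasurable
  simp only [eLpNorm', enorm_eq_self, ENNReal.rpow_one, div_one] at hHolder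
  have hp0 : 0 < p := by linarith
  calc (∫⁻ a, f a ∂μ) ^ p
      ≤ ((∫⁻ a, f a ^ p ∂μ) ^ (1 / p) * μ univ ^ (1 - 1 / p)) ^ p :=
        ENNReal.rpow_le_rpow hHolder hp0.le
    _ = μ univ ^ (p - 1) * ∫⁻ a, f a ^ p ∂μ := by
        rw [ENNReal.mul_rpow_of_nonneg _ _ hp0.le, ← ENNReal.rpow_mul, ← ENNReal.rpow_mul,
          one_div_mul_cancel hp0.ne', ENNReal.rpow_one, mul_comm]
        congr 2
        field_simp

section Tensorization

variable {ι : Type*} [Fintype ι] [DecidableEq ι] {X : ι → Type*} [∀ i, MeasurableSpace (X i)]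
  {μ : ∀ i, Measure (X i)} [∀ i, SigmaFinite (μ i)]

theorem lintegral_pi_le_mul_of_forall_update {F₁ F₂ : (∀ i, X i) → ℝ≥0∞} (hF₁ : Measurable F₁)
    (hF₂ : Measurable F₂) (i : ι) {a : ℝ≥0∞}
    (h : ∀ x, ∫⁻ y, F₁ (update x i y) ∂μ i ≤ a * ∫⁻ y, F₂ (update x i y) ∂μ i) :
    ∫⁻ x, F₁ x ∂Measure.pi μ ≤ a * ∫⁻ x, F₂ x ∂Measure.pi μ := by
  rw [← lintegral_const_mul _ hF₂]
  refine lintegral_le_of_lmarginal_le {i} hF₁ (hF₂.const_mul a) fun x => ?_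
  have hF₂x : Measurable fun y => F₂ (update x i y) := hF₂.comp (measurable_update x)
  simp only [lmarginal_singleton]
  rw [lintegral_const_mul _ hF₂x]
  exact h x

theorem lintegral_mul_prod_le_prod_mul_lintegral {G : (∀ i, X i) → ℝ≥0∞} (hG : Measurable G)
    {w : ∀ i, X i → ℝ≥0∞} (hw : ∀ i, Measurable (w i)) {c : ι → ℝ≥0∞}
    (h : ∀ i x, ∫⁻ y, G (update x i y) * w i y ∂μ i ≤ c i * ∫⁻ y, G (update x i y) ∂μ i) :
    ∫⁻ x, G x * ∏ i, w i (x i) ∂Measure.pi μ ≤ (∏ i, c i) * ∫⁻ x, G x ∂Measure.pi μ := by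
  have hmeas : ∀ s : Finset ι, Measurable fun x : ∀ i, X i => G x * ∏ j ∈ s, w j (x j) :=
    fun s => hG.mul (Finset.measurable_prod s fun j _ => (hw j).comp (measurable_pi_apply j))
  suffices ∀ s : Finset ι,
      ∫⁻ x, G x * ∏ j ∈ s, w j (x j) ∂Measure.pi μ ≤ (∏ j ∈ s, c j) * ∫⁻ x, G x ∂Measure.pi μ from
    this Finset.univ
  intro s
  induction s using Finset.induction_on with
  | empty => simp
  | insert i s hi ih =>
    calc ∫⁻ x, G x * ∏ j ∈ insert i s, w j (x j) ∂Measure.pi μ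
        ≤ c i * ∫⁻ x, G x * ∏ j ∈ s, w j (x j) ∂Measure.pi μ := by
          refine lintegral_pi_le_mul_of_forall_update (hmeas _) (hmeas s) i fun x => ?_
          have hs : ∀ y, ∏ j ∈ s, w j (update x i y j) = ∏ j ∈ s, w j (x j) := fun y =>
            Finset.prod_congr rfl fun j hj => by rw [update_of_ne (ne_of_mem_of_not_mem hj hi)]
          have hGi : Measurable fun y => G (update x i y) := hG.comp (measurable_update x)
          have hGwi : Measurable fun y => G (update x i y) * w i y := hGi.mul (hw i)
          simp_rw [Finset.prod_insert hi, update_self, hs, ← mul_assoc]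
          rw [lintegral_mul_const _ hGwi, lintegral_mul_const _ hGi, ← mul_assoc]
          gcongr
          exact h i x
      _ ≤ c i * ((∏ j ∈ s, c j) * ∫⁻ x, G x ∂Measure.pi μ) := by gcongr
      _ = (∏ j ∈ insert i s, c j) * ∫⁻ x, G x ∂Measure.pi μ := by
          rw [Finset.prod_insert hi, mul_assoc]

end Tensorization

theorem add_polarCoord_symm_eq_circleMap (c : ℂ) (q : ℝ × ℝ) :
    c + Complex.polarCoord.symm q = circleMap c q.1 q.2 := by
  simp [circleMap, Complex.exp_mul_I, ← ofReal_cos, ← ofReal_sin]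

theorem setLIntegral_ball_eq_lintegral_circleMap {h : ℂ → ℝ≥0∞} (hh : Measurable h) (c : ℂ)
    (R : ℝ) :
    ∫⁻ z in ball c R, h z =
      ∫⁻ ρ in Ioo 0 R, ENNReal.ofReal ρ * ∫⁻ θ in Ioo (-π) π, h (circleMap c ρ θ) := by
  have hS : Ioo 0 R ×ˢ Ioo (-π) π ⊆ polarCoord.target := by
    rw [polarCoord_target]
    exact prod_mono Ioo_subset_Ioi_self le_rfl
  have hind : ∀ q ∈ polarCoord.target,
      ENNReal.ofReal q.1 • (ball c R).indicator h (c + Complex.polarCoord.symm q) =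
        (Ioo 0 R ×ˢ Ioo (-π) π).indicator
          (fun q : ℝ × ℝ => ENNReal.ofReal q.1 * h (circleMap c q.1 q.2)) q := by
    rintro ⟨ρ, θ⟩ ⟨hρ, hθ⟩
    rw [mem_Ioi] at hρ
    have hdist : dist (circleMap c ρ θ) c = ρ := mem_sphere.1 (circleMap_mem_sphere c hρ.le θ)
    rw [add_polarCoord_symm_eq_circleMap]
    by_cases hρR : ρ < R
    · have hmem : (ρ, θ) ∈ Ioo 0 R ×ˢ Ioo (-π) π := ⟨⟨hρ, hρR⟩, hθ⟩
      rw [indicator_of_mem (by rwa [mem_ball, hdist]), indicator_of_mem hmem]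
      rfl
    · have hmem : (ρ, θ) ∉ Ioo 0 R ×ˢ Ioo (-π) π := fun h => hρR h.1.2
      rw [indicator_of_notMem (by rwa [mem_ball, hdist]), indicator_of_notMem hmem, smul_zero]
  have hmeas : Measurable fun q : ℝ × ℝ => ENNReal.ofReal q.1 * h (circleMap c q.1 q.2) := by
    have := hh.comp (circleMap.continuous (c := c)).measurable
    fun_prop
  calc ∫⁻ z in ball c R, h z
      = ∫⁻ z, (ball c R).indicator h (c + z) := by
        rw [lintegral_add_left_eq_self, lintegral_indicator measurableSet_ball]
    _ = ∫⁻ q in polarCoord.target,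
          ENNReal.ofReal q.1 • (ball c R).indicator h (c + Complex.polarCoord.symm q) :=
        (Complex.lintegral_comp_polarCoord_symm _).symm
    _ = ∫⁻ q in Ioo 0 R ×ˢ Ioo (-π) π, ENNReal.ofReal q.1 * h (circleMap c q.1 q.2) := by
        rw [setLIntegral_congr_fun polarCoord.open_target.measurableSet hind,
          setLIntegral_indicator (measurableSet_Ioo.prod measurableSet_Ioo), inter_eq_left.2 hS]
    _ = ∫⁻ ρ in Ioo 0 R, ENNReal.ofReal ρ * ∫⁻ θ in Ioo (-π) π, h (circleMap c ρ θ) := by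
        rw [Measure.volume_eq_prod, setLIntegral_prod _ hmeas.aemeasurable]
        refine lintegral_congr fun ρ => ?_
        have : Measurable fun θ => h (circleMap c ρ θ) := hh.comp (measurable_circleMap c ρ)
        dsimp only
        exact lintegral_const_mul _ this

theorem setLIntegral_Ioo_zero_ofReal {R : ℝ} (hR : 0 ≤ R) :
    ∫⁻ ρ in Ioo 0 R, ENNReal.ofReal ρ = ENNReal.ofReal (R ^ 2 / 2) := by
  rw [← ofReal_integral_eq_lintegral_ofReal, ← integral_Ioc_eq_integral_Ioo,
    ← intervalIntegral.integral_of_le hR, integral_id]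
  · ring_nf
  · exact (continuous_id.integrableOn_Icc (a := 0) (b := R)).mono_set Ioo_subset_Icc_self
  · exact (ae_restrict_iff' measurableSet_Ioo).2 (.of_forall fun ρ hρ => hρ.1.le)

section SubMeanValue

variable {E : Type*} [NormedAddCommGroup E] [NormedSpace ℂ E] [CompleteSpace E] {p : ℝ}

theorem ofReal_two_pi_mul_enorm_le_setLIntegral_circleMap {g : ℂ → E} {c : ℂ} {R : ℝ}
    (hg : DiffContOnCl ℂ g (ball c |R|)) :
    ENNReal.ofReal (2 * π) * ‖g c‖ₑ ≤ ∫⁻ θ in Ioo (-π) π, ‖g (circleMap c R θ)‖ₑ := by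
  have hshift : ∫ θ in (0)..(2 * π), g (circleMap c R θ) =
      ∫ θ in (-π)..π, g (circleMap c R θ) := by
    have := (periodic_circleMap c R).comp g |>.intervalIntegral_add_eq 0 (-π)
    rwa [zero_add, show -π + 2 * π = π by ring] at this
  have hcancel : ENNReal.ofReal (2 * π) * ‖(2 * π)⁻¹‖ₑ = 1 := by
    rw [Real.enorm_eq_ofReal (by positivity), ← ENNReal.ofReal_mul (by positivity),
      mul_inv_cancel₀ (by positivity), ENNReal.ofReal_one]
  rw [← hg.circleAverage, circleAverage_def, hshift, enorm_smul,
    intervalIntegral.integral_of_le (by linarith [pi_pos]),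
    setLIntegral_congr Ioo_ae_eq_Ioc, ← mul_assoc, hcancel, one_mul]
  exact enorm_integral_le_lintegral_enorm _

theorem ofReal_two_pi_mul_enorm_rpow_le_setLIntegral_circleMap (hp : 1 ≤ p) {g : ℂ → E}
    {c : ℂ} {R : ℝ} (hg : DiffContOnCl ℂ g (ball c |R|)) :
    ENNReal.ofReal (2 * π) * ‖g c‖ₑ ^ p ≤ ∫⁻ θ in Ioo (-π) π, ‖g (circleMap c R θ)‖ₑ ^ p := by
  set a := ENNReal.ofReal (2 * π)
  have hcont : Continuous fun θ => g (circleMap c R θ) :=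
    hg.continuousOn_ball.comp_continuous (continuous_circleMap c R)
      fun θ => sphere_subset_closedBall (circleMap_mem_sphere' c R θ)
  have hJensen := rpow_lintegral_le_measure_univ_rpow_mul_lintegral_rpow hp
    (μ := volume.restrict (Ioo (-π) π)) hcont.enorm.aemeasurable
  rw [Measure.restrict_apply_univ, Real.volume_Ioo, sub_neg_eq_add, ← two_mul] at hJensen
  have hap : a ^ (p - 1) ≠ 0 :=
    (ENNReal.rpow_pos (by simp [a, pi_pos]) (by finiteness)).ne'
  have hsplit : a ^ p = a ^ (p - 1) * a := by
    simpa using ENNReal.rpow_add_of_nonneg (x := a) (p - 1) 1 (by linarith) zero_le_one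
  rw [← ENNReal.mul_le_mul_iff_right hap (by finiteness)]
  calc a ^ (p - 1) * (a * ‖g c‖ₑ ^ p) = (a * ‖g c‖ₑ) ^ p := by
        rw [ENNReal.mul_rpow_of_nonneg _ _ (by linarith), hsplit, mul_assoc]
    _ ≤ _ := by gcongr; exact ofReal_two_pi_mul_enorm_le_setLIntegral_circleMap hg
    _ ≤ _ := hJensen

theorem ofReal_pi_mul_sq_mul_enorm_rpow_le_setLIntegral_ball (hp : 1 ≤ p) {g : ℂ → E} {c : ℂ}
    {R : ℝ} (hR : 0 ≤ R) (hg : DifferentiableOn ℂ g (ball c R)) :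
    ENNReal.ofReal (π * R ^ 2) * ‖g c‖ₑ ^ p ≤ ∫⁻ z in ball c R, ‖g z‖ₑ ^ p := by
  set h := (ball c R).indicator fun z => ‖g z‖ₑ ^ p
  have hh : Measurable h :=
    (ENNReal.continuous_rpow_const.comp_continuousOn hg.continuousOn.enorm).measurable_indicator
      measurableSet_ball
  have hcircle : ∀ ρ ∈ Ioo 0 R, ENNReal.ofReal (2 * π) * ‖g c‖ₑ ^ p ≤
      ∫⁻ θ in Ioo (-π) π, h (circleMap c ρ θ) := by
    rintro ρ ⟨hρ, hρR⟩
    have hmem : ∀ θ, circleMap c ρ θ ∈ ball c R := fun θ => by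
      rwa [mem_ball, mem_sphere.1 (circleMap_mem_sphere c hρ.le θ)]
    simp only [h, indicator_of_mem (hmem _)]
    refine ofReal_two_pi_mul_enorm_rpow_le_setLIntegral_circleMap hp (hg.diffContOnCl_ball ?_)
    rw [abs_of_pos hρ]
    exact closedBall_subset_ball hρR
  calc ENNReal.ofReal (π * R ^ 2) * ‖g c‖ₑ ^ p
      = (∫⁻ ρ in Ioo 0 R, ENNReal.ofReal ρ) * (ENNReal.ofReal (2 * π) * ‖g c‖ₑ ^ p) := by
        rw [setLIntegral_Ioo_zero_ofReal hR, ← mul_assoc, ← ENNReal.ofReal_mul (by positivity)]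
        ring_nf
    _ = ∫⁻ ρ in Ioo 0 R, ENNReal.ofReal ρ * (ENNReal.ofReal (2 * π) * ‖g c‖ₑ ^ p) :=
        (lintegral_mul_const _ ENNReal.measurable_ofReal).symm
    _ ≤ ∫⁻ ρ in Ioo 0 R, ENNReal.ofReal ρ * ∫⁻ θ in Ioo (-π) π, h (circleMap c ρ θ) :=
        setLIntegral_mono' measurableSet_Ioo fun ρ hρ => by gcongr; exact hcircle ρ hρ
    _ = ∫⁻ z in ball c R, h z := (setLIntegral_ball_eq_lintegral_circleMap hh c R).symm
    _ = ∫⁻ z in ball c R, ‖g z‖ₑ ^ p :=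
        setLIntegral_congr_fun measurableSet_ball fun z hz => indicator_of_mem hz _

theorem enorm_rpow_le_ofReal_four_div_pi_mul_setLIntegral (hp : 1 ≤ p) {g : ℂ → E}
    (hg : DifferentiableOn ℂ g (ball 0 1)) {z : ℂ} (hz : ‖z‖ ≤ 1 / 2) :
    ‖g z‖ₑ ^ p ≤ ENNReal.ofReal (4 / π) * ∫⁻ w in ball 0 1, ‖g w‖ₑ ^ p := by
  have hball : ball z (1 / 2) ⊆ ball 0 1 := ball_subset_ball' (by rw [dist_zero_right]; linarith)
  have hmean := ofReal_pi_mul_sq_mul_enorm_rpow_le_setLIntegral_ball hp (c := z) (by norm_num)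
    (hg.mono hball)
  have hone : ENNReal.ofReal (4 / π) * ENNReal.ofReal (π * (1 / 2) ^ 2) = 1 := by
    rw [← ENNReal.ofReal_mul (by positivity), ← ENNReal.ofReal_one]
    congr 1
    field_simp
    norm_num
  calc ‖g z‖ₑ ^ p
      = ENNReal.ofReal (4 / π) * (ENNReal.ofReal (π * (1 / 2) ^ 2) * ‖g z‖ₑ ^ p) := by
        rw [← mul_assoc, hone, one_mul]
    _ ≤ ENNReal.ofReal (4 / π) * ∫⁻ w in ball 0 1, ‖g w‖ₑ ^ p := by
        gcongr
        exact hmean.trans (lintegral_mono_set hball)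

theorem rpow_le_two_rpow_abs {x : ℝ} (γ : ℝ) (hx : 1 / 2 ≤ x) (hx1 : x ≤ 1) :
    x ^ γ ≤ 2 ^ |γ| := by
  have hx0 : 0 < x := by linarith
  calc x ^ γ ≤ x ^ (-|γ|) := Real.rpow_le_rpow_of_exponent_ge hx0 hx1 (neg_abs_le γ)
    _ = x⁻¹ ^ |γ| := by rw [Real.rpow_neg hx0.le, Real.inv_rpow hx0.le]
    _ ≤ 2 ^ |γ| := by
        gcongr
        rw [inv_le_comm₀ hx0 two_pos]
        linarith

/-- `C_γ` of the one-variable estimate: `2 ^ |γ|` bounds the weight on `1/2 ≤ |z| < 1`, and on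
`|z| ≤ 1/2` the factor `4 / π = (π (1/2)²)⁻¹` comes from the sub-mean value estimate. -/
def unitDiskWeightConstant (γ : ℝ) : ℝ≥0∞ :=
  2 ^ |γ| + ENNReal.ofReal (4 / π) * ∫⁻ z in closedBall (0 : ℂ) (1 / 2), ENNReal.ofReal (‖z‖ ^ γ)

theorem unitDiskWeightConstant_ne_zero (γ : ℝ) : unitDiskWeightConstant γ ≠ 0 := by
  simp [unitDiskWeightConstant]

theorem unitDiskWeightConstant_ne_top {γ : ℝ} (hγ : -2 < γ) : unitDiskWeightConstant γ ≠ ⊤ := by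
  have hint : IntegrableOn (fun z : ℂ => ‖z‖ ^ γ) (ball 0 1) := by
    refine integrableOn_ball_of_norm_le_rpow (C := 1) (α := -γ) (by simp) (by simp; linarith)
      (.of_forall fun z => ?_) (measurable_norm.pow_const γ).aestronglyMeasurable
    rw [neg_neg, one_mul, Real.norm_of_nonneg (by positivity)]
  have hfin :=
    (hint.mono_set (closedBall_subset_ball (by norm_num : (1 / 2 : ℝ) < 1))).lintegral_lt_top
  unfold unitDiskWeightConstant
  finiteness

theorem setLIntegral_ball_enorm_rpow_mul_norm_rpow_le (hp : 1 ≤ p) (γ : ℝ) {g : ℂ → E}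
    (hg : DifferentiableOn ℂ g (ball 0 1)) :
    ∫⁻ z in ball 0 1, ‖g z‖ₑ ^ p * ENNReal.ofReal (‖z‖ ^ γ) ≤
      unitDiskWeightConstant γ * ∫⁻ z in ball 0 1, ‖g z‖ₑ ^ p := by
  set I := ∫⁻ z in ball 0 1, ‖g z‖ₑ ^ p
  set w : ℂ → ℝ≥0∞ := fun z => ENNReal.ofReal (‖z‖ ^ γ)
  have hw : Measurable ((closedBall 0 (1 / 2)).indicator w) :=
    Measurable.indicator (by fun_prop) measurableSet_closedBall
  have hpt : ∀ z ∈ ball (0 : ℂ) 1, ‖g z‖ₑ ^ p * w z ≤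
      2 ^ |γ| * ‖g z‖ₑ ^ p + ENNReal.ofReal (4 / π) * I * (closedBall 0 (1 / 2)).indicator w z := by
    intro z hz
    rw [mem_ball_zero_iff] at hz
    by_cases hz2 : ‖z‖ ≤ 1 / 2
    · rw [indicator_of_mem (mem_closedBall_zero_iff.2 hz2)]
      refine le_add_left ?_
      gcongr
      exact enorm_rpow_le_ofReal_four_div_pi_mul_setLIntegral hp hg hz2
    · refine le_add_right ?_
      rw [mul_comm]
      gcongr
      rw [← ENNReal.ofReal_ofNat 2, ENNReal.ofReal_rpow_of_nonneg zero_le_two (abs_nonneg γ)]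
      exact ENNReal.ofReal_le_ofReal (rpow_le_two_rpow_abs γ (by linarith) hz.le)
  calc ∫⁻ z in ball 0 1, ‖g z‖ₑ ^ p * w z
      ≤ ∫⁻ z in ball 0 1, 2 ^ |γ| * ‖g z‖ₑ ^ p +
          ENNReal.ofReal (4 / π) * I * (closedBall 0 (1 / 2)).indicator w z :=
        setLIntegral_mono' measurableSet_ball hpt
    _ = 2 ^ |γ| * I +
          ENNReal.ofReal (4 / π) * I * ∫⁻ z in ball 0 1, (closedBall 0 (1 / 2)).indicator w z := by
        rw [lintegral_add_right _ (hw.const_mul _), lintegral_const_mul' _ _ (by finiteness),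
          lintegral_const_mul _ hw]
    _ ≤ 2 ^ |γ| * I + ENNReal.ofReal (4 / π) * I * ∫⁻ z in closedBall 0 (1 / 2), w z := by
        rw [setLIntegral_indicator measurableSet_closedBall]
        gcongr
        exact inter_subset_left
    _ = unitDiskWeightConstant γ * I := by
        unfold unitDiskWeightConstant
        ring

end SubMeanValue

theorem isOpen_polydisc (n : ℕ) : IsOpen (polydisc n) := by
  simp only [polydisc, ofPred_forall]
  exact isOpen_iInter_of_finite fun j => isOpen_lt (by fun_prop) continuous_const

theorem update_mem_polydisc_iff {n : ℕ} {x : Fin n → ℂ} {i : Fin n} {y : ℂ} :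
    update x i y ∈ polydisc n ↔ ‖y‖ < 1 ∧ ∀ j ≠ i, ‖x j‖ < 1 := by
  change (∀ j, ‖update x i y j‖ < 1) ↔ _
  constructor
  · intro h
    exact ⟨by simpa using h i, fun j hj => by simpa [hj] using h j⟩
  · rintro ⟨hy, hx⟩ j
    rcases eq_or_ne j i with rfl | hj
    · simpa using hy
    · simpa [hj] using hx j hj

theorem lintegral_indicator_polydisc_update_mul_le {E : Type*} [NormedAddCommGroup E]
    [NormedSpace ℂ E] [CompleteSpace E] {n : ℕ} {p : ℝ} (hp : 1 ≤ p) (γ : ℝ)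
    {f : (Fin n → ℂ) → E} (hf : DifferentiableOn ℂ f (polydisc n)) (i : Fin n) (x : Fin n → ℂ) :
    ∫⁻ y, (polydisc n).indicator (fun z => ‖f z‖ₑ ^ p) (update x i y) * ENNReal.ofReal (‖y‖ ^ γ) ≤
      unitDiskWeightConstant γ *
        ∫⁻ y, (polydisc n).indicator (fun z => ‖f z‖ₑ ^ p) (update x i y) := by
  by_cases hx : ∀ j ≠ i, ‖x j‖ < 1
  · have hslice : ∀ y, (polydisc n).indicator (fun z => ‖f z‖ₑ ^ p) (update x i y) =
        (ball 0 1).indicator (fun y => ‖f (update x i y)‖ₑ ^ p) y := fun y => by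
      simp only [indicator, update_mem_polydisc_iff, mem_ball_zero_iff, and_iff_left hx]
    have hupdate : Differentiable ℂ (update x i) := fun y =>
      (hasFDerivAt_update x y).differentiableAt
    simp_rw [hslice, ← indicator_mul_left (g := fun y : ℂ => ENNReal.ofReal (‖y‖ ^ γ)),
      lintegral_indicator measurableSet_ball]
    exact setLIntegral_ball_enorm_rpow_mul_norm_rpow_le hp γ <| hf.comp hupdate.differentiableOn
      fun y hy => update_mem_polydisc_iff.2 ⟨mem_ball_zero_iff.1 hy, hx⟩
  · push Not at hx
    obtain ⟨j, hji, hxj⟩ := hx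
    have hzero : ∀ y, (polydisc n).indicator (fun z => ‖f z‖ₑ ^ p) (update x i y) = 0 :=
      fun y => indicator_of_notMem (fun h => (update_mem_polydisc_iff.1 h).2 j hji |>.not_ge hxj) _
    simp [hzero]

theorem weighted_Lp_estimate_polydisc_general (p : ℝ) (hp : 1 ≤ p) (n : ℕ)
    (γ : Fin n → ℝ) (hγ : ∀ j, -2 < γ j) :
    ∃ C : ℝ, 0 < C ∧ ∀ f : (Fin n → ℂ) → ℂ,
      DifferentiableOn ℂ f (polydisc n) →
      (∫⁻ z in polydisc n, (‖f z‖₊ : ℝ≥0∞) ^ p) ≠ ⊤ →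
      ∫⁻ z in polydisc n,
          (‖f z‖₊ : ℝ≥0∞) ^ p * ENNReal.ofReal (∏ j, ‖z j‖ ^ γ j) ≤
        ENNReal.ofReal C * ∫⁻ z in polydisc n, (‖f z‖₊ : ℝ≥0∞) ^ p := by
  refine ⟨∏ j, (unitDiskWeightConstant (γ j)).toReal, Finset.prod_pos fun j _ =>
    ENNReal.toReal_pos (unitDiskWeightConstant_ne_zero _) (unitDiskWeightConstant_ne_top (hγ j)),
    fun f hf _ => ?_⟩
  simp_rw [← enorm_eq_nnnorm]
  have hmeas := (isOpen_polydisc n).measurableSet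
  have hG : Measurable ((polydisc n).indicator fun z => ‖f z‖ₑ ^ p) :=
    (ENNReal.continuous_rpow_const.comp_continuousOn hf.continuousOn.enorm).measurable_indicator
      hmeas
  have key := lintegral_mul_prod_le_prod_mul_lintegral (μ := fun _ => volume) hG
    (w := fun j y => ENNReal.ofReal (‖y‖ ^ γ j)) (fun j => by fun_prop)
    fun i x => lintegral_indicator_polydisc_update_mul_le hp (γ i) hf i x
  rw [← volume_pi, lintegral_indicator hmeas] at key
  simp_rw [← indicator_mul_left (g := fun z : Fin n → ℂ => ∏ j, ENNReal.ofReal (‖z j‖ ^ γ j)),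
    lintegral_indicator hmeas] at key
  rw [ENNReal.ofReal_prod_of_nonneg fun j _ => ENNReal.toReal_nonneg]
  simp_rw [ENNReal.ofReal_toReal (unitDiskWeightConstant_ne_top (hγ _)),
    ENNReal.ofReal_prod_of_nonneg fun j _ => Real.rpow_nonneg (norm_nonneg _) _]
  exact key

/-- For `1 ≤ p < ∞` and `γ ∈ ℝⁿ` with all `γ_j > −2`, there is `C > 0`
such that every `f ∈ A^p(𝔻ⁿ)` satisfies `∫_{𝔻ⁿ} |f|^p ∏_j |z_j|^{γ_j} dV ≤ C ∫_{𝔻ⁿ} |f|^p dV`. -/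
theorem weighted_Lp_estimate_polydisc (p : ℝ) (hp : 1 ≤ p) (n : ℕ) (hn : 1 ≤ n)
    (γ : Fin n → ℝ) (hγ : ∀ j, -2 < γ j) :
    ∃ C : ℝ, 0 < C ∧ ∀ f : (Fin n → ℂ) → ℂ,
      DifferentiableOn ℂ f (polydisc n) →
      (∫⁻ z in polydisc n, (‖f z‖₊ : ℝ≥0∞) ^ p) ≠ ⊤ →
      ∫⁻ z in polydisc n,
          (‖f z‖₊ : ℝ≥0∞) ^ p * ENNReal.ofReal (∏ j, ‖z j‖ ^ γ j) ≤
        ENNReal.ofReal C * ∫⁻ z in polydisc n, (‖f z‖₊ : ℝ≥0∞) ^ p :=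
  weighted_Lp_estimate_polydisc_general p hp n γ hγ
end
end

section
/- Let n ≥ 2, let B ∈ M_n(ℤ) with det B > 0 and B^{-1} ⪰ 0 entrywise, let A = adj B, and let Γ = {σ_ν : ν ∈ ℤ^n} where σ_ν(z) = exp(2πi A^{-1}ν) ⊙ z acts on the punctured polydisc (𝔻*)^n. Then for α ∈ ℤ^n, the monomial φ_α(z) = z^α satisfies σ_ν^♯ φ_α = φ_α for all ν ∈ ℤ^n (i.e., φ_α is a Γ-invariant holomorphic function on (𝔻*)^n) if and only if there exists β ∈ ℤ^n with α = βA − 𝟙. -/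
/-!
The pullback `σ_ν^♯` multiplies `z^α` by `exp (2πi ⟨α + 𝟙, A⁻¹ν⟩)`: the Jacobian contributes the
`𝟙`. Hence `z^α` is invariant iff `⟨(α + 𝟙) A⁻¹, ν⟩ ∈ ℤ` for every `ν ∈ ℤⁿ`, i.e. iff the row
vector `β = (α + 𝟙) A⁻¹` is integral, which is `α = βA - 𝟙`.
-/

open MeasureTheory Complex
open scoped ENNReal NNReal

noncomputable section

/-- The `k`-th entry of `A⁻¹ ν` for an integer vector `ν` (computed over `ℚ`). -/
def gammaCoef {n : ℕ} (A : Matrix (Fin n) (Fin n) ℤ) (ν : Fin n → ℤ) (k : Fin n) : ℚ :=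
  ∑ l, (A.map (Int.cast : ℤ → ℚ))⁻¹ k l * (ν l : ℚ)

open Matrix

section IntegralVectors

variable {ι : Type*} [Fintype ι] [DecidableEq ι]

theorem forall_exists_int_dotProduct_eq_iff (w : ι → ℚ) :
    (∀ ν : ι → ℤ, ∃ m : ℤ, w ⬝ᵥ (fun i => (ν i : ℚ)) = m) ↔
      ∃ β : ι → ℤ, w = fun i => (β i : ℚ) := by
  constructor
  · intro h
    choose β hβ using fun j => h (Pi.single j 1)
    refine ⟨β, funext fun j => ?_⟩
    simpa [Pi.single_apply, dotProduct] using hβ j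
  · rintro ⟨β, rfl⟩ ν
    exact ⟨β ⬝ᵥ ν, by simp [dotProduct]⟩

theorem vecMul_nonsing_inv_eq_iff {K : Type*} [Field K] {M : Matrix ι ι K} (hM : IsUnit M.det)
    (v w : ι → K) : v ᵥ* M⁻¹ = w ↔ v = w ᵥ* M := by
  constructor
  · rintro rfl
    rw [vecMul_vecMul, nonsing_inv_mul M hM, vecMul_one]
  · rintro rfl
    rw [vecMul_vecMul, mul_nonsing_inv M hM, vecMul_one]

end IntegralVectors

section GammaCoef

variable {n : ℕ}

theorem sum_mul_gammaCoef (A : Matrix (Fin n) (Fin n) ℤ) (v : Fin n → ℚ) (ν : Fin n → ℤ) :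
    ∑ k, v k * gammaCoef A ν k = v ᵥ* (A.map (Int.cast : ℤ → ℚ))⁻¹ ⬝ᵥ (fun l => (ν l : ℚ)) := by
  rw [← dotProduct_mulVec]
  rfl

theorem forall_sum_mul_gammaCoef_int_iff (A : Matrix (Fin n) (Fin n) ℤ) (hA : A.det ≠ 0)
    (v : Fin n → ℤ) :
    (∀ ν : Fin n → ℤ, ∃ m : ℤ, ∑ k, (v k : ℚ) * gammaCoef A ν k = m) ↔
      ∃ β : Fin n → ℤ, v = β ᵥ* A := by
  have hdet : IsUnit (A.map (Int.cast : ℤ → ℚ)).det := by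
    have hcast : (A.map (Int.cast : ℤ → ℚ)).det = (A.det : ℚ) :=
      (RingHom.map_det (Int.castRingHom ℚ) A).symm
    rw [hcast, isUnit_iff_ne_zero]
    exact_mod_cast hA
  simp_rw [sum_mul_gammaCoef, forall_exists_int_dotProduct_eq_iff,
    vecMul_nonsing_inv_eq_iff hdet]
  refine exists_congr fun β => ?_
  rw [funext_iff, funext_iff]
  refine forall_congr' fun k => ?_
  rw [← Int.cast_inj (α := ℚ)]
  exact iff_of_eq (congrArg _ (RingHom.map_vecMul (Int.castRingHom ℚ) A β k).symm)

end GammaCoef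

theorem exp_mul_prod_zpow {ι : Type*} [Fintype ι] (c : ι → ℂ) (α : ι → ℤ) (z : ι → ℂ) :
    (∏ k, exp (c k)) * ∏ k, (exp (c k) * z k) ^ α k
      = exp (∑ k, ((α k : ℂ) + 1) * c k) * ∏ k, z k ^ α k := by
  simp_rw [mul_zpow, ← exp_int_mul, Finset.prod_mul_distrib, ← exp_sum, ← mul_assoc,
    ← exp_add, ← Finset.sum_add_distrib, add_mul, one_mul, add_comm]

theorem exp_two_pi_I_mul_rat_eq_one_iff (q : ℚ) :
    exp (2 * (Real.pi : ℂ) * I * q) = 1 ↔ ∃ m : ℤ, q = m := by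
  rw [exp_eq_one_iff]
  refine exists_congr fun m => ?_
  rw [mul_comm _ (2 * (Real.pi : ℂ) * I), mul_right_inj' two_pi_I_ne_zero]
  exact_mod_cast Iff.rfl

theorem forall_polydisc_mul_prod_zpow_eq_iff {ι : Type*} [Fintype ι] (w : ℂ) (α : ι → ℤ) :
    (∀ z : ι → ℂ, (∀ k, z k ≠ 0 ∧ ‖z k‖ < 1) → w * ∏ k, z k ^ α k = ∏ k, z k ^ α k) ↔
      w = 1 := by
  refine ⟨fun h => ?_, by rintro rfl z -; exact one_mul _⟩
  have hhalf : ∀ _ : ι, (1 / 2 : ℂ) ≠ 0 ∧ ‖(1 / 2 : ℂ)‖ < 1 := fun _ => by norm_num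
  have hprod : ∏ k, (1 / 2 : ℂ) ^ α k ≠ 0 :=
    Finset.prod_ne_zero_iff.mpr fun k _ => zpow_ne_zero _ (by norm_num)
  exact mul_right_cancel₀ hprod ((h _ hhalf).trans (one_mul _).symm)

theorem monomial_invariant_iff_general {n : ℕ} (B : Matrix (Fin n) (Fin n) ℤ)
    (hdet : 0 < B.det)
    (α : Fin n → ℤ) :
    (∀ ν : Fin n → ℤ, ∀ z : Fin n → ℂ,
      (∀ k, z k ≠ 0 ∧ ‖z k‖ < 1) →
      (∏ k, Complex.exp (2 * (Real.pi : ℂ) * Complex.I * (gammaCoef B.adjugate ν k : ℂ))) *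
        ∏ k, (Complex.exp (2 * (Real.pi : ℂ) * Complex.I *
          (gammaCoef B.adjugate ν k : ℂ)) * z k) ^ α k
        = ∏ k, z k ^ α k) ↔
    ∃ β : Fin n → ℤ, ∀ k, α k = (∑ l, β l * B.adjugate l k) - 1 := by
  have hA : B.adjugate.det ≠ 0 := by
    rw [det_adjugate]
    exact pow_ne_zero _ hdet.ne'
  have hβ : (∃ β, (fun k => α k + 1) = β ᵥ* B.adjugate) ↔
      ∃ β : Fin n → ℤ, ∀ k, α k = (∑ l, β l * B.adjugate l k) - 1 :=
    exists_congr fun β => by simp only [funext_iff, eq_sub_iff_add_eq]; rfl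
  rw [← hβ, ← forall_sum_mul_gammaCoef_int_iff B.adjugate hA]
  refine forall_congr' fun ν => ?_
  simp_rw [exp_mul_prod_zpow, forall_polydisc_mul_prod_zpow_eq_iff,
    ← exp_two_pi_I_mul_rat_eq_one_iff]
  push_cast
  rw [Finset.mul_sum]
  exact iff_of_eq (congrArg (exp · = 1) (Finset.sum_congr rfl fun k _ => by ring))

/-- With `A = adj B` and `σ_ν(z) = exp(2πi A⁻¹ν) ⊙ z` acting on the
punctured polydisc `(𝔻*)ⁿ`, the monomial `φ_α(z) = z^α` satisfies `σ_ν^♯ φ_α = φ_α` for all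
`ν ∈ ℤⁿ` (note `det σ_ν' = ∏_k exp(2πi (A⁻¹ν)_k)`) if and only if `α = βA − 𝟙` for some
`β ∈ ℤⁿ`. -/
theorem monomial_invariant_iff {n : ℕ} (hn : 2 ≤ n) (B : Matrix (Fin n) (Fin n) ℤ)
    (hdet : 0 < B.det)
    (hinv : ∀ i j, 0 ≤ (B.map (Int.cast : ℤ → ℚ))⁻¹ i j)
    (α : Fin n → ℤ) :
    (∀ ν : Fin n → ℤ, ∀ z : Fin n → ℂ,
      (∀ k, z k ≠ 0 ∧ ‖z k‖ < 1) →
      (∏ k, Complex.exp (2 * (Real.pi : ℂ) * Complex.I * (gammaCoef B.adjugate ν k : ℂ))) *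
        ∏ k, (Complex.exp (2 * (Real.pi : ℂ) * Complex.I *
          (gammaCoef B.adjugate ν k : ℂ)) * z k) ^ α k
        = ∏ k, z k ^ α k) ↔
    ∃ β : Fin n → ℤ, ∀ k, α k = (∑ l, β l * B.adjugate l k) - 1 :=
  monomial_invariant_iff_general B hdet α
end
end
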